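/- Let q₁ = x²yz, q₂ = xy²z, q₃ = xyz², q₄ = xy(x²−y²), q₅ = xz(x²−z²), q₆ = yz(y²−z²) in ℂ[x,y,z], and let H(a,b,c) be the 6×6 matrix of all second-order partial derivatives of q₁,…,q₆ (columns indexed by the pairs (x,x),(y,y),(z,z),(x,y),(x,z),(y,z)) evaluated at (a,b,c). Then for every (a,b,c) ∈ ℂ³ \ {0} with abc = 0, the matrix H(a,b,c) has rank at most 4; i.e. along the three coordinate lines the rank of the osculating matrix drops by at least 2. -/
import Mathlib


open MvPolynomial

/-- The six quartics x²yz, xy²z, xyz², xy(x²−y²), xz(x²−z²), yz(y²−z²). -/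
noncomputable def B3quartics : Fin 6 → MvPolynomial (Fin 3) ℂ :=
  ![X 0 ^ 2 * X 1 * X 2,
    X 0 * X 1 ^ 2 * X 2,
    X 0 * X 1 * X 2 ^ 2,
    X 0 * X 1 * (X 0 ^ 2 - X 1 ^ 2),
    X 0 * X 2 * (X 0 ^ 2 - X 2 ^ 2),
    X 1 * X 2 * (X 1 ^ 2 - X 2 ^ 2)]

/-- The six unordered pairs of variables (x,x),(y,y),(z,z),(x,y),(x,z),(y,z). -/
def varPairs : Fin 6 → Fin 3 × Fin 3 :=
  ![(0, 0), (1, 1), (2, 2), (0, 1), (0, 2), (1, 2)]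

/-- The 6×6 matrix of all second-order partial derivatives of the six B₃
quartics, evaluated at a point of ℂ³. -/
noncomputable def B3Hessian (v : Fin 3 → ℂ) : Matrix (Fin 6) (Fin 6) ℂ :=
  Matrix.of fun i j =>
    eval v (pderiv (varPairs j).1 (pderiv (varPairs j).2 (B3quartics i)))

lemma pderiv_two' {i : Fin 3} : pderiv i (2 : MvPolynomial (Fin 3) ℂ) = 0 := by
  rw [show (2 : MvPolynomial (Fin 3) ℂ) = C 2 from (map_ofNat C 2).symm, pderiv_C]

set_option maxHeartbeats 1000000 in
lemma b3hess_eq (a b c : ℂ) : B3Hessian ![a,b,c] =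
  !![2*b*c, 0, 0, 2*a*c, 2*a*b, a^2;
     0, 2*a*c, 0, 2*b*c, b^2, 2*a*b;
     0, 0, 2*a*b, c^2, 2*b*c, 2*a*c;
     6*a*b, -6*a*b, 0, 3*a^2-3*b^2, 0, 0;
     6*a*c, 0, -6*a*c, 0, 3*a^2-3*c^2, 0;
     0, 6*b*c, -6*b*c, 0, 0, 3*b^2-3*c^2] := by
  ext i j
  fin_cases i <;> fin_cases j <;>
    simp [B3Hessian, B3quartics, varPairs, pderiv_mul, pderiv_pow, pderiv_two',
      Matrix.cons_val_succ, Matrix.cons_val_zero, Matrix.cons_val_one, Matrix.head_cons,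
      Fin.isValue, show ((5:Fin 6)) = Fin.succ 4 from rfl,
      show ((4:Fin 6)) = Fin.succ 3 from rfl, Matrix.vecHead, Matrix.vecTail] <;> ring

lemma rank_le_four' {M : Matrix (Fin 6) (Fin 6) ℂ} (A : Matrix (Fin 6) (Fin 4) ℂ)
    (B : Matrix (Fin 4) (Fin 6) ℂ) (hM : M = A * B) : M.rank ≤ 4 := by
  rw [hM]
  exact (Matrix.rank_mul_le_left A B).trans (by simpa using Matrix.rank_le_card_width A)

set_option maxHeartbeats 2000000 in
/-- At every nonzero point (a,b,c) with abc = 0 the matrix of second-order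
partials of the six B₃ quartics has rank at most 4: along the three coordinate
lines the rank of the osculating matrix drops by at least 2. -/
theorem b3_hessian_rank_drops_on_lines (a b c : ℂ)
    (hv : ![a, b, c] ≠ 0) (h : a * b * c = 0) :
    (B3Hessian ![a, b, c]).rank ≤ 4 := by
  rcases mul_eq_zero.mp h with h' | hc
  · rcases mul_eq_zero.mp h' with ha | hb
    · -- a = 0
      subst ha
      refine rank_le_four'
        (!![0, 2*b*c, 0, 0;
            0, 0, 2*b*c, b^2;
            0, 0, c^2, 2*b*c;
            0, 0, -3*b^2, 0;
            0, 0, 0, -3*c^2;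
            1, 0, 0, 0])
        (!![0, 6*b*c, -6*b*c, 0, 0, 3*b^2-3*c^2;
            1, 0, 0, 0, 0, 0;
            0, 0, 0, 1, 0, 0;
            0, 0, 0, 0, 1, 0]) ?_
      rw [b3hess_eq]
      ext i j
      fin_cases i <;> fin_cases j <;>
        simp [Matrix.mul_apply, Fin.sum_univ_succ, Matrix.cons_val_succ,
          show ((5:Fin 6)) = Fin.succ 4 from rfl, show ((4:Fin 6)) = Fin.succ 3 from rfl,
          Matrix.vecHead, Matrix.vecTail] <;> ring
    · -- b = 0
      subst hb
      refine rank_le_four'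
        (!![0, 0, 2*a*c, a^2;
            0, 2*a*c, 0, 0;
            0, 0, c^2, 2*a*c;
            0, 0, 3*a^2, 0;
            1, 0, 0, 0;
            0, 0, 0, -3*c^2])
        (!![6*a*c, 0, -6*a*c, 0, 3*a^2-3*c^2, 0;
            0, 1, 0, 0, 0, 0;
            0, 0, 0, 1, 0, 0;
            0, 0, 0, 0, 0, 1]) ?_
      rw [b3hess_eq]
      ext i j
      fin_cases i <;> fin_cases j <;>
        simp [Matrix.mul_apply, Fin.sum_univ_succ, Matrix.cons_val_succ,
          show ((5:Fin 6)) = Fin.succ 4 from rfl, show ((4:Fin 6)) = Fin.succ 3 from rfl,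
          Matrix.vecHead, Matrix.vecTail] <;> ring
  · -- c = 0
    subst hc
    refine rank_le_four'
      (!![0, 0, 2*a*b, a^2;
          0, 0, b^2, 2*a*b;
          0, 2*a*b, 0, 0;
          1, 0, 0, 0;
          0, 0, 3*a^2, 0;
          0, 0, 0, 3*b^2])
      (!![6*a*b, -6*a*b, 0, 3*a^2-3*b^2, 0, 0;
          0, 0, 1, 0, 0, 0;
          0, 0, 0, 0, 1, 0;
          0, 0, 0, 0, 0, 1]) ?_
    rw [b3hess_eq]
    ext i j
    fin_cases i <;> fin_cases j <;>
      simp [Matrix.mul_apply, Fin.sum_univ_succ, Matrix.cons_val_succ,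
        show ((5:Fin 6)) = Fin.succ 4 from rfl, show ((4:Fin 6)) = Fin.succ 3 from rfl,
        Matrix.vecHead, Matrix.vecTail] <;> ring
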